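/- arXiv:math-ph/0703062 — 2 statements merged into one kernel-verified Lean document; each statement's English description precedes it below -/
import Mathlib

section
/- The prolongation T^E P of a fibration ν: P → M with respect to a Lie algebroid E, with fiber {(b,v) ∈ E_x × T_p P : ρ(b) = T_p ν(v)}, anchor (p,b,v) ↦ v, and bracket of projectable sections [(σ_1,U_1),(σ_2,U_2)] = ([σ_1,σ_2],[U_1,U_2]), is a Lie algebroid over P. -/
/-!
The prolongation `T^E P` of a fibration `ν : P → M` with respect to a Lie
algebroid `E`, in local coordinates.  The base `M` is `Fin n → ℝ`, the fibration
`P` has fibered coordinates `(x, u) ∈ (Fin n → ℝ) × (Fin q → ℝ)`, `E` has frame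
index `Fin m` and structure functions `ρ x α i`, `C x γ α β`.  A point of
`T^E_p P` is `(b, v)` with `ρ(b) = Tν(w)`, i.e. the full tangent vector is
`w = (ρ(x)·b, v)`; hence a section of `T^E P` is a pair `(Z, V)`.  The anchor is
`(p,b,v) ↦ v` (full tangent vector `(ρ b, v)`), acting on functions via `rhoP`;
the bracket `brPZ, brPV` is the one determined by the bracket of projectable
sections.  Theorem: given that `(ρ, C)` satisfy antisymmetry and the two structure
equations of a Lie algebroid, the prolongation bracket is antisymmetric, satisfies
the Leibniz rule with respect to the anchor, satisfies the Jacobi identity, and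
the anchor maps brackets to commutators — i.e. `T^E P` is a Lie algebroid over `P`.
-/

open scoped BigOperators

/-- Partial derivative of `f` in the `i`-th coordinate direction. -/
noncomputable def pd {κ : Type*} [Fintype κ] [DecidableEq κ]
    (f : (κ → ℝ) → ℝ) (x : κ → ℝ) (i : κ) : ℝ :=
  fderiv ℝ f x (Pi.single i 1)

variable {n m q : ℕ}

/-- Action of (the anchor of) a section `(Z, V)` of `T^E P` on a function on `P`. -/
noncomputable def rhoP (ρ : (Fin n → ℝ) → Fin m → Fin n → ℝ)
    (Z : (Fin n → ℝ) → (Fin q → ℝ) → Fin m → ℝ)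
    (V : (Fin n → ℝ) → (Fin q → ℝ) → Fin q → ℝ)
    (g : (Fin n → ℝ) → (Fin q → ℝ) → ℝ) :
    (Fin n → ℝ) → (Fin q → ℝ) → ℝ :=
  fun x u =>
    (∑ i, (∑ α, ρ x α i * Z x u α) * pd (fun y => g y u) x i)
      + ∑ A, V x u A * pd (fun w => g x w) u A

/-- `E`-component of the bracket of two sections of `T^E P`. -/
noncomputable def brPZ (ρ : (Fin n → ℝ) → Fin m → Fin n → ℝ)
    (C : (Fin n → ℝ) → Fin m → Fin m → Fin m → ℝ)
    (Z₁ : (Fin n → ℝ) → (Fin q → ℝ) → Fin m → ℝ)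
    (V₁ : (Fin n → ℝ) → (Fin q → ℝ) → Fin q → ℝ)
    (Z₂ : (Fin n → ℝ) → (Fin q → ℝ) → Fin m → ℝ)
    (V₂ : (Fin n → ℝ) → (Fin q → ℝ) → Fin q → ℝ) :
    (Fin n → ℝ) → (Fin q → ℝ) → Fin m → ℝ :=
  fun x u γ =>
    rhoP ρ Z₁ V₁ (fun y w => Z₂ y w γ) x u
      - rhoP ρ Z₂ V₂ (fun y w => Z₁ y w γ) x u
      + ∑ α, ∑ β, C x γ α β * Z₁ x u α * Z₂ x u β

/-- Vertical component of the bracket of two sections of `T^E P`. -/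
noncomputable def brPV (ρ : (Fin n → ℝ) → Fin m → Fin n → ℝ)
    (Z₁ : (Fin n → ℝ) → (Fin q → ℝ) → Fin m → ℝ)
    (V₁ : (Fin n → ℝ) → (Fin q → ℝ) → Fin q → ℝ)
    (Z₂ : (Fin n → ℝ) → (Fin q → ℝ) → Fin m → ℝ)
    (V₂ : (Fin n → ℝ) → (Fin q → ℝ) → Fin q → ℝ) :
    (Fin n → ℝ) → (Fin q → ℝ) → Fin q → ℝ :=
  fun x u A =>
    rhoP ρ Z₁ V₁ (fun y w => V₂ y w A) x u
      - rhoP ρ Z₂ V₂ (fun y w => V₁ y w A) x u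

/-- A smooth section of `T^E P` (jointly smooth components). -/
def SmoothSec (Z : (Fin n → ℝ) → (Fin q → ℝ) → Fin m → ℝ)
    (V : (Fin n → ℝ) → (Fin q → ℝ) → Fin q → ℝ) : Prop :=
  (∀ α, ContDiff ℝ (⊤ : ℕ∞) (fun p : (Fin n → ℝ) × (Fin q → ℝ) => Z p.1 p.2 α)) ∧
  (∀ A, ContDiff ℝ (⊤ : ℕ∞) (fun p : (Fin n → ℝ) × (Fin q → ℝ) => V p.1 p.2 A))

/-! ### Auxiliary material for the proof -/

section Aux

abbrev PQ (n q : ℕ) := (Fin n → ℝ) × (Fin q → ℝ)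

/-- The full vector field on `P` associated to a section `(Z, V)` of `T^E P`. -/
noncomputable def Wvf (ρ : (Fin n → ℝ) → Fin m → Fin n → ℝ)
    (Z : (Fin n → ℝ) → (Fin q → ℝ) → Fin m → ℝ)
    (V : (Fin n → ℝ) → (Fin q → ℝ) → Fin q → ℝ) : PQ n q → PQ n q :=
  fun p => (fun i => ∑ α, ρ p.1 α i * Z p.1 p.2 α, fun A => V p.1 p.2 A)

lemma pd_fst {g : (Fin n → ℝ) → (Fin q → ℝ) → ℝ} {x : Fin n → ℝ} {u : Fin q → ℝ}
    (hg : DifferentiableAt ℝ (fun p : PQ n q => g p.1 p.2) (x, u)) (i : Fin n) :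
    pd (fun y => g y u) x i
      = fderiv ℝ (fun p : PQ n q => g p.1 p.2) (x, u) (Pi.single i 1, 0) := by
  have hincl : HasFDerivAt (fun y : Fin n → ℝ => ((y, u) : PQ n q))
      (ContinuousLinearMap.inl ℝ (Fin n → ℝ) (Fin q → ℝ)) x :=
    (hasFDerivAt_id x).prodMk (hasFDerivAt_const u x)
  have h : HasFDerivAt (fun y => g y u)
      ((fderiv ℝ (fun p : PQ n q => g p.1 p.2) (x, u)).comp
        (ContinuousLinearMap.inl ℝ (Fin n → ℝ) (Fin q → ℝ))) x := by
    have := (hg.hasFDerivAt).comp x hincl; exact this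
  rw [pd, h.fderiv]; rfl

lemma pd_snd {g : (Fin n → ℝ) → (Fin q → ℝ) → ℝ} {x : Fin n → ℝ} {u : Fin q → ℝ}
    (hg : DifferentiableAt ℝ (fun p : PQ n q => g p.1 p.2) (x, u)) (A : Fin q) :
    pd (fun w => g x w) u A
      = fderiv ℝ (fun p : PQ n q => g p.1 p.2) (x, u) (0, Pi.single A 1) := by
  have hincl : HasFDerivAt (fun w : Fin q → ℝ => ((x, w) : PQ n q))
      (ContinuousLinearMap.inr ℝ (Fin n → ℝ) (Fin q → ℝ)) u :=
    (hasFDerivAt_const x u).prodMk (hasFDerivAt_id u)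
  have h : HasFDerivAt (fun w => g x w)
      ((fderiv ℝ (fun p : PQ n q => g p.1 p.2) (x, u)).comp
        (ContinuousLinearMap.inr ℝ (Fin n → ℝ) (Fin q → ℝ))) u :=
    (hg.hasFDerivAt).comp u hincl
  rw [pd, h.fderiv]; rfl

lemma clm_decomp (L : PQ n q →L[ℝ] ℝ) (w : PQ n q) :
    L w = ∑ i, w.1 i * L (Pi.single i 1, 0) + ∑ A, w.2 A * L (0, Pi.single A 1) := by
  have hw : w = (∑ i, w.1 i • ((Pi.single i 1 : Fin n → ℝ), (0 : Fin q → ℝ)))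
      + (∑ A, w.2 A • ((0 : Fin n → ℝ), (Pi.single A 1 : Fin q → ℝ))) := by
    ext j
    · simp [Prod.fst_sum, Prod.snd_sum, Finset.sum_apply, Pi.single_apply, mul_comm]
    · simp [Prod.fst_sum, Prod.snd_sum, Finset.sum_apply, Pi.single_apply, mul_comm]
  conv_lhs => rw [hw]
  rw [map_add, map_sum, map_sum]
  refine congrArg₂ (· + ·) (Finset.sum_congr rfl fun i _ => ?_)
    (Finset.sum_congr rfl fun A _ => ?_) <;> rw [map_smul, smul_eq_mul]

/-- `rhoP` is the directional derivative of the joint function along `Wvf`. -/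
lemma rhoP_eq {ρ : (Fin n → ℝ) → Fin m → Fin n → ℝ}
    {Z : (Fin n → ℝ) → (Fin q → ℝ) → Fin m → ℝ}
    {V : (Fin n → ℝ) → (Fin q → ℝ) → Fin q → ℝ}
    {g : (Fin n → ℝ) → (Fin q → ℝ) → ℝ} {x : Fin n → ℝ} {u : Fin q → ℝ}
    (hg : DifferentiableAt ℝ (fun p : PQ n q => g p.1 p.2) (x, u)) :
    rhoP ρ Z V g x u
      = fderiv ℝ (fun p : PQ n q => g p.1 p.2) (x, u) (Wvf ρ Z V (x, u)) := by
  rw [rhoP, clm_decomp (fderiv ℝ (fun p : PQ n q => g p.1 p.2) (x, u)) (Wvf ρ Z V (x, u))]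
  refine congrArg₂ (· + ·) (Finset.sum_congr rfl fun i _ => ?_)
    (Finset.sum_congr rfl fun A _ => ?_)
  · rw [pd_fst hg]; rfl
  · rw [pd_snd hg]; rfl

lemma smooth_Wvf {ρ : (Fin n → ℝ) → Fin m → Fin n → ℝ}
    (hρ : ∀ α i, ContDiff ℝ (⊤ : ℕ∞) (fun x => ρ x α i))
    {Z : (Fin n → ℝ) → (Fin q → ℝ) → Fin m → ℝ}
    {V : (Fin n → ℝ) → (Fin q → ℝ) → Fin q → ℝ}
    (hZV : SmoothSec Z V) : ContDiff ℝ (⊤ : ℕ∞) (Wvf ρ Z V) := by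
  apply ContDiff.prodMk
  · exact contDiff_pi.2 fun i =>
      ContDiff.sum fun α _ => ((hρ α i).comp contDiff_fst).mul (hZV.1 α)
  · exact contDiff_pi.2 fun A => hZV.2 A

lemma hat_rhoP {ρ : (Fin n → ℝ) → Fin m → Fin n → ℝ}
    {Z : (Fin n → ℝ) → (Fin q → ℝ) → Fin m → ℝ}
    {V : (Fin n → ℝ) → (Fin q → ℝ) → Fin q → ℝ}
    {g : (Fin n → ℝ) → (Fin q → ℝ) → ℝ}
    (hg : Differentiable ℝ (fun p : PQ n q => g p.1 p.2)) :
    (fun p : PQ n q => rhoP ρ Z V g p.1 p.2)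
      = fun p => fderiv ℝ (fun p : PQ n q => g p.1 p.2) p (Wvf ρ Z V p) := by
  funext p
  have h := rhoP_eq (ρ := ρ) (Z := Z) (V := V) (g := g) (x := p.1) (u := p.2) (hg (p.1, p.2))
  simpa using h

lemma smooth_hat_rhoP {ρ : (Fin n → ℝ) → Fin m → Fin n → ℝ}
    (hρ : ∀ α i, ContDiff ℝ (⊤ : ℕ∞) (fun x => ρ x α i))
    {Z : (Fin n → ℝ) → (Fin q → ℝ) → Fin m → ℝ}
    {V : (Fin n → ℝ) → (Fin q → ℝ) → Fin q → ℝ}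
    (hZV : SmoothSec Z V)
    {g : (Fin n → ℝ) → (Fin q → ℝ) → ℝ}
    (hg : ContDiff ℝ (⊤ : ℕ∞) (fun p : PQ n q => g p.1 p.2)) :
    ContDiff ℝ (⊤ : ℕ∞) (fun p : PQ n q => rhoP ρ Z V g p.1 p.2) := by
  rw [hat_rhoP (hg.differentiable (by simp))]
  exact (hg.fderiv_right (by simp)).clm_apply (smooth_Wvf hρ hZV)

lemma rhoP_mul {ρ : (Fin n → ℝ) → Fin m → Fin n → ℝ}
    {Z : (Fin n → ℝ) → (Fin q → ℝ) → Fin m → ℝ}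
    {V : (Fin n → ℝ) → (Fin q → ℝ) → Fin q → ℝ}
    {f g : (Fin n → ℝ) → (Fin q → ℝ) → ℝ} {x : Fin n → ℝ} {u : Fin q → ℝ}
    (hf : DifferentiableAt ℝ (fun p : PQ n q => f p.1 p.2) (x, u))
    (hg : DifferentiableAt ℝ (fun p : PQ n q => g p.1 p.2) (x, u)) :
    rhoP ρ Z V (fun y w => f y w * g y w) x u
      = f x u * rhoP ρ Z V g x u + rhoP ρ Z V f x u * g x u := by
  have h := rhoP_eq (ρ := ρ) (Z := Z) (V := V)
    (g := fun y w => f y w * g y w) (x := x) (u := u) (hf.mul hg)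
  rw [h, fderiv_fun_mul hf hg, rhoP_eq hf, rhoP_eq hg]
  simp [smul_eq_mul]; ring

lemma rhoP_xonly {ρ : (Fin n → ℝ) → Fin m → Fin n → ℝ}
    {Z : (Fin n → ℝ) → (Fin q → ℝ) → Fin m → ℝ}
    {V : (Fin n → ℝ) → (Fin q → ℝ) → Fin q → ℝ}
    (h : (Fin n → ℝ) → ℝ) (x : Fin n → ℝ) (u : Fin q → ℝ) :
    rhoP ρ Z V (fun y _ => h y) x u
      = ∑ i, (∑ α, ρ x α i * Z x u α) * pd h x i := by
  rw [rhoP]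
  have h0 : ∀ A : Fin q, pd (fun _ : Fin q → ℝ => h x) u A = 0 := by
    intro A; rw [pd, fderiv_fun_const]; simp
  simp [h0]

lemma rhoP_sum {ρ : (Fin n → ℝ) → Fin m → Fin n → ℝ}
    {Z : (Fin n → ℝ) → (Fin q → ℝ) → Fin m → ℝ}
    {V : (Fin n → ℝ) → (Fin q → ℝ) → Fin q → ℝ}
    {κ : Type*} [Fintype κ] {g : κ → (Fin n → ℝ) → (Fin q → ℝ) → ℝ}
    {x : Fin n → ℝ} {u : Fin q → ℝ}
    (hg : ∀ j, DifferentiableAt ℝ (fun p : PQ n q => g j p.1 p.2) (x, u)) :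
    rhoP ρ Z V (fun y w => ∑ j, g j y w) x u = ∑ j, rhoP ρ Z V (g j) x u := by
  have hsum : DifferentiableAt ℝ (fun p : PQ n q => ∑ j, g j p.1 p.2) (x, u) :=
    DifferentiableAt.fun_sum fun j _ => hg j
  rw [rhoP_eq (g := fun y w => ∑ j, g j y w) hsum]
  have h2 : fderiv ℝ (fun p : PQ n q => ∑ j, g j p.1 p.2) (x, u)
      = ∑ j, fderiv ℝ (fun p : PQ n q => g j p.1 p.2) (x, u) :=
    fderiv_fun_sum fun j _ => hg j
  rw [h2]
  simp only [ContinuousLinearMap.sum_apply]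
  exact Finset.sum_congr rfl fun j _ => (rhoP_eq (hg j)).symm

lemma fderiv_comp_snd_apply {W : PQ n q → PQ n q} {p : PQ n q}
    (hW : DifferentiableAt ℝ W p) (A : Fin q) (v : PQ n q) :
    fderiv ℝ (fun y => (W y).2 A) p v = (fderiv ℝ W p v).2 A := by
  set e : PQ n q →L[ℝ] ℝ :=
    (ContinuousLinearMap.proj A).comp (ContinuousLinearMap.snd ℝ (Fin n → ℝ) (Fin q → ℝ)) with he
  have h : HasFDerivAt (fun y => e (W y)) (e.comp (fderiv ℝ W p)) p :=
    (e.hasFDerivAt).comp p hW.hasFDerivAt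
  have h2 : fderiv ℝ (fun y => (W y).2 A) p = e.comp (fderiv ℝ W p) := h.fderiv
  rw [h2]; rfl

lemma fderiv_comp_fst_apply {W : PQ n q → PQ n q} {p : PQ n q}
    (hW : DifferentiableAt ℝ W p) (i : Fin n) (v : PQ n q) :
    fderiv ℝ (fun y => (W y).1 i) p v = (fderiv ℝ W p v).1 i := by
  set e : PQ n q →L[ℝ] ℝ :=
    (ContinuousLinearMap.proj i).comp (ContinuousLinearMap.fst ℝ (Fin n → ℝ) (Fin q → ℝ)) with he
  have h : HasFDerivAt (fun y => e (W y)) (e.comp (fderiv ℝ W p)) p :=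
    (e.hasFDerivAt).comp p hW.hasFDerivAt
  have h2 : fderiv ℝ (fun y => (W y).1 i) p = e.comp (fderiv ℝ W p) := h.fderiv
  rw [h2]; rfl

lemma comm_fderiv {G : PQ n q → ℝ} {W₁ W₂ : PQ n q → PQ n q}
    (hG : ContDiff ℝ (⊤ : ℕ∞) G) (h₁ : ContDiff ℝ (⊤ : ℕ∞) W₁) (h₂ : ContDiff ℝ (⊤ : ℕ∞) W₂) (p : PQ n q) :
    fderiv ℝ (fun y => fderiv ℝ G y (W₂ y)) p (W₁ p)
      - fderiv ℝ (fun y => fderiv ℝ G y (W₁ y)) p (W₂ p)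
      = fderiv ℝ G p (VectorField.lieBracket ℝ W₁ W₂ p) := by
  have hG' : Differentiable ℝ (fderiv ℝ G) := (hG.fderiv_right (m := 1) (WithTop.coe_le_coe.2 le_top)).differentiable one_ne_zero
  rw [fderiv_clm_apply (hG' p) ((h₂.differentiable (by simp)) p),
      fderiv_clm_apply (hG' p) ((h₁.differentiable (by simp)) p)]
  have hsymm : IsSymmSndFDerivAt ℝ G p := (hG.contDiffAt).isSymmSndFDerivAt (by simp; exact WithTop.coe_le_coe.2 le_top)
  simp only [ContinuousLinearMap.add_apply, ContinuousLinearMap.coe_comp', Function.comp_apply,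
    ContinuousLinearMap.flip_apply, VectorField.lieBracket, map_sub]
  rw [hsymm.eq (W₁ p) (W₂ p)]
  ring

lemma s_rot {a b c : ℕ} (f : Fin a → Fin b → Fin c → ℝ) :
    ∑ x, ∑ y, ∑ z, f x y z = ∑ y, ∑ z, ∑ x, f x y z := by
  rw [Finset.sum_comm]
  exact Finset.sum_congr rfl fun _ _ => Finset.sum_comm

lemma s_rot2 {a b c : ℕ} (f : Fin a → Fin b → Fin c → ℝ) :
    ∑ x, ∑ y, ∑ z, f x y z = ∑ z, ∑ x, ∑ y, f x y z := by
  rw [s_rot, s_rot]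

lemma s_inner {a b c : ℕ} (f : Fin a → Fin b → Fin c → ℝ) :
    ∑ x, ∑ y, ∑ z, f x y z = ∑ x, ∑ z, ∑ y, f x y z :=
  Finset.sum_congr rfl fun _ _ => Finset.sum_comm

lemma alg_heq1 {n m : ℕ} (i : Fin n) (r : Fin m → Fin n → ℝ) (pdr : Fin m → Fin n → ℝ)
    (Cx : Fin m → Fin m → Fin m → ℝ) (z1 z2 d1 d2 : Fin m → ℝ)
    (h1 : ∀ α β, (∑ j, r α j * pdr β j) - (∑ j, r β j * pdr α j)
        = ∑ γ, r γ i * Cx γ α β) :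
    (∑ α, (r α i * d1 α + (∑ j, (∑ β, r β j * z1 β) * pdr α j) * z2 α))
      - ∑ α, (r α i * d2 α + (∑ j, (∑ β, r β j * z2 β) * pdr α j) * z1 α)
      = ∑ γ, r γ i * (d1 γ - d2 γ + ∑ α, ∑ β, Cx γ α β * z1 α * z2 β) := by
  have hA : (∑ α, (∑ j, (∑ β, r β j * z1 β) * pdr α j) * z2 α)
      = ∑ α, ∑ β, (z1 α * z2 β * ∑ j, r α j * pdr β j) := by
    simp only [Finset.sum_mul, Finset.mul_sum]
    rw [s_rot2 (fun α j β => r β j * z1 β * pdr α j * z2 α)]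
    exact Finset.sum_congr rfl fun β _ => Finset.sum_congr rfl fun α _ =>
      Finset.sum_congr rfl fun j _ => by ring
  have hB : (∑ α, (∑ j, (∑ β, r β j * z2 β) * pdr α j) * z1 α)
      = ∑ α, ∑ β, (z1 α * z2 β * ∑ j, r β j * pdr α j) := by
    simp only [Finset.sum_mul, Finset.mul_sum]
    rw [s_rot (fun α j β => r β j * z2 β * pdr α j * z1 α)]
    rw [s_inner (fun j β α => r β j * z2 β * pdr α j * z1 α)]
    rw [s_rot (fun j α β => r β j * z2 β * pdr α j * z1 α)]
    exact Finset.sum_congr rfl fun α _ => Finset.sum_congr rfl fun β _ =>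
      Finset.sum_congr rfl fun j _ => by ring
  have hR : (∑ γ, r γ i * (∑ α, ∑ β, Cx γ α β * z1 α * z2 β))
      = ∑ α, ∑ β, (z1 α * z2 β * ∑ γ, r γ i * Cx γ α β) := by
    simp only [Finset.mul_sum]
    rw [s_rot (fun γ α β => r γ i * (Cx γ α β * z1 α * z2 β))]
    exact Finset.sum_congr rfl fun α _ => Finset.sum_congr rfl fun β _ =>
      Finset.sum_congr rfl fun γ _ => by ring
  have key : (∑ α, (∑ j, (∑ β, r β j * z1 β) * pdr α j) * z2 α)
      - (∑ α, (∑ j, (∑ β, r β j * z2 β) * pdr α j) * z1 α)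
      = ∑ γ, r γ i * (∑ α, ∑ β, Cx γ α β * z1 α * z2 β) := by
    rw [hA, hB, hR, ← Finset.sum_sub_distrib]
    refine Finset.sum_congr rfl fun α _ => ?_
    rw [← Finset.sum_sub_distrib]
    refine Finset.sum_congr rfl fun β _ => ?_
    rw [← mul_sub, h1]
  simp only [Finset.sum_add_distrib, mul_add, mul_sub]
  simp only [Finset.sum_add_distrib, Finset.sum_sub_distrib]
  linear_combination key

end Aux
section F2
variable {ρ : (Fin n → ℝ) → Fin m → Fin n → ℝ}
    {C : (Fin n → ℝ) → Fin m → Fin m → Fin m → ℝ}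
    {Z₁ Z₂ : (Fin n → ℝ) → (Fin q → ℝ) → Fin m → ℝ}
    {V₁ V₂ : (Fin n → ℝ) → (Fin q → ℝ) → Fin q → ℝ}

lemma F2h (hρ : ∀ α i, ContDiff ℝ (⊤ : ℕ∞) (fun x => ρ x α i))
    (hs₁ : SmoothSec Z₁ V₁) (hs₂ : SmoothSec Z₂ V₂)
    (heq1 : ∀ (x : Fin n → ℝ) (i : Fin n) (α β : Fin m),
      (∑ j, ρ x α j * pd (fun y => ρ y β i) x j)
        - (∑ j, ρ x β j * pd (fun y => ρ y α i) x j)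
        = ∑ γ, ρ x γ i * C x γ α β)
    (x : Fin n → ℝ) (u : Fin q → ℝ) (i : Fin n) :
    rhoP ρ Z₁ V₁ (fun y w => ∑ α, ρ y α i * Z₂ y w α) x u
      - rhoP ρ Z₂ V₂ (fun y w => ∑ α, ρ y α i * Z₁ y w α) x u
      = ∑ γ, ρ x γ i * brPZ ρ C Z₁ V₁ Z₂ V₂ x u γ := by
  have hd₁ : ∀ α, DifferentiableAt ℝ
      (fun p : PQ n q => ρ p.1 α i * Z₂ p.1 p.2 α) (x, u) := fun α =>
    ((((hρ α i).comp contDiff_fst).mul (hs₂.1 α)).differentiable (by simp)) (x, u)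
  have hd₂ : ∀ α, DifferentiableAt ℝ
      (fun p : PQ n q => ρ p.1 α i * Z₁ p.1 p.2 α) (x, u) := fun α =>
    ((((hρ α i).comp contDiff_fst).mul (hs₁.1 α)).differentiable (by simp)) (x, u)
  rw [rhoP_sum hd₁, rhoP_sum hd₂]
  have hm₁ : ∀ α, rhoP ρ Z₁ V₁ (fun y w => ρ y α i * Z₂ y w α) x u
      = ρ x α i * rhoP ρ Z₁ V₁ (fun y w => Z₂ y w α) x u
        + (∑ j, (∑ β, ρ x β j * Z₁ x u β) * pd (fun y => ρ y α i) x j) * Z₂ x u α := by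
    intro α
    rw [rhoP_mul ((((hρ α i).comp contDiff_fst).differentiable (by simp)) (x, u))
      (((hs₂.1 α).differentiable (by simp)) (x, u)),
      rhoP_xonly (fun y => ρ y α i) x u]
  have hm₂ : ∀ α, rhoP ρ Z₂ V₂ (fun y w => ρ y α i * Z₁ y w α) x u
      = ρ x α i * rhoP ρ Z₂ V₂ (fun y w => Z₁ y w α) x u
        + (∑ j, (∑ β, ρ x β j * Z₂ x u β) * pd (fun y => ρ y α i) x j) * Z₁ x u α := by
    intro α
    rw [rhoP_mul ((((hρ α i).comp contDiff_fst).differentiable (by simp)) (x, u))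
      (((hs₁.1 α).differentiable (by simp)) (x, u)),
      rhoP_xonly (fun y => ρ y α i) x u]
  simp only [hm₁, hm₂]
  have halg := alg_heq1 i (fun α j => ρ x α j) (fun α j => pd (fun y => ρ y α i) x j)
    (fun γ α β => C x γ α β) (Z₁ x u) (Z₂ x u)
    (fun α => rhoP ρ Z₁ V₁ (fun y w => Z₂ y w α) x u)
    (fun α => rhoP ρ Z₂ V₂ (fun y w => Z₁ y w α) x u)
    (fun α β => heq1 x i α β)
  rw [halg]
  exact Finset.sum_congr rfl fun γ _ => by rw [brPZ]

/-- The vector field of the bracket section is the Lie bracket of the vector fields. -/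
lemma F2 (hρ : ∀ α i, ContDiff ℝ (⊤ : ℕ∞) (fun x => ρ x α i))
    (hs₁ : SmoothSec Z₁ V₁) (hs₂ : SmoothSec Z₂ V₂)
    (heq1 : ∀ (x : Fin n → ℝ) (i : Fin n) (α β : Fin m),
      (∑ j, ρ x α j * pd (fun y => ρ y β i) x j)
        - (∑ j, ρ x β j * pd (fun y => ρ y α i) x j)
        = ∑ γ, ρ x γ i * C x γ α β)
    (p : PQ n q) :
    Wvf ρ (brPZ ρ C Z₁ V₁ Z₂ V₂) (brPV ρ Z₁ V₁ Z₂ V₂) p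
      = VectorField.lieBracket ℝ (Wvf ρ Z₁ V₁) (Wvf ρ Z₂ V₂) p := by
  obtain ⟨x, u⟩ := p
  have hW₁ := (smooth_Wvf hρ hs₁).differentiable (by simp) (x, u)
  have hW₂ := (smooth_Wvf hρ hs₂).differentiable (by simp) (x, u)
  apply Prod.ext
  · funext i
    show (∑ α, ρ x α i * brPZ ρ C Z₁ V₁ Z₂ V₂ x u α)
      = (VectorField.lieBracket ℝ (Wvf ρ Z₁ V₁) (Wvf ρ Z₂ V₂) (x, u)).1 i
    rw [← F2h hρ hs₁ hs₂ heq1 x u i]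
    have hg₁ : DifferentiableAt ℝ
        (fun p : PQ n q => ∑ α, ρ p.1 α i * Z₁ p.1 p.2 α) (x, u) :=
      DifferentiableAt.fun_sum fun α _ =>
        ((((hρ α i).comp contDiff_fst).mul (hs₁.1 α)).differentiable (by simp)) (x, u)
    have hg₂ : DifferentiableAt ℝ
        (fun p : PQ n q => ∑ α, ρ p.1 α i * Z₂ p.1 p.2 α) (x, u) :=
      DifferentiableAt.fun_sum fun α _ =>
        ((((hρ α i).comp contDiff_fst).mul (hs₂.1 α)).differentiable (by simp)) (x, u)
    have e₂ : rhoP ρ Z₁ V₁ (fun y w => ∑ α, ρ y α i * Z₂ y w α) x u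
        = (fderiv ℝ (Wvf ρ Z₂ V₂) (x, u) (Wvf ρ Z₁ V₁ (x, u))).1 i := by
      calc rhoP ρ Z₁ V₁ (fun y w => ∑ α, ρ y α i * Z₂ y w α) x u
          = fderiv ℝ (fun p : PQ n q => ∑ α, ρ p.1 α i * Z₂ p.1 p.2 α) (x, u)
            (Wvf ρ Z₁ V₁ (x, u)) := rhoP_eq hg₂
        _ = fderiv ℝ (fun y => (Wvf ρ Z₂ V₂ y).1 i) (x, u) (Wvf ρ Z₁ V₁ (x, u)) := rfl
        _ = _ := fderiv_comp_fst_apply hW₂ i _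
    have e₁ : rhoP ρ Z₂ V₂ (fun y w => ∑ α, ρ y α i * Z₁ y w α) x u
        = (fderiv ℝ (Wvf ρ Z₁ V₁) (x, u) (Wvf ρ Z₂ V₂ (x, u))).1 i := by
      calc rhoP ρ Z₂ V₂ (fun y w => ∑ α, ρ y α i * Z₁ y w α) x u
          = fderiv ℝ (fun p : PQ n q => ∑ α, ρ p.1 α i * Z₁ p.1 p.2 α) (x, u)
            (Wvf ρ Z₂ V₂ (x, u)) := rhoP_eq hg₁
        _ = fderiv ℝ (fun y => (Wvf ρ Z₁ V₁ y).1 i) (x, u) (Wvf ρ Z₂ V₂ (x, u)) := rfl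
        _ = _ := fderiv_comp_fst_apply hW₁ i _
    rw [e₁, e₂, VectorField.lieBracket]
    simp
  · funext A
    show brPV ρ Z₁ V₁ Z₂ V₂ x u A
      = (VectorField.lieBracket ℝ (Wvf ρ Z₁ V₁) (Wvf ρ Z₂ V₂) (x, u)).2 A
    rw [brPV]
    have e₂ : rhoP ρ Z₁ V₁ (fun y w => V₂ y w A) x u
        = (fderiv ℝ (Wvf ρ Z₂ V₂) (x, u) (Wvf ρ Z₁ V₁ (x, u))).2 A := by
      calc rhoP ρ Z₁ V₁ (fun y w => V₂ y w A) x u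
          = fderiv ℝ (fun p : PQ n q => V₂ p.1 p.2 A) (x, u) (Wvf ρ Z₁ V₁ (x, u)) :=
            rhoP_eq (((hs₂.2 A).differentiable (by simp)) (x, u))
        _ = fderiv ℝ (fun y => (Wvf ρ Z₂ V₂ y).2 A) (x, u) (Wvf ρ Z₁ V₁ (x, u)) := rfl
        _ = _ := fderiv_comp_snd_apply hW₂ A _
    have e₁ : rhoP ρ Z₂ V₂ (fun y w => V₁ y w A) x u
        = (fderiv ℝ (Wvf ρ Z₁ V₁) (x, u) (Wvf ρ Z₂ V₂ (x, u))).2 A := by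
      calc rhoP ρ Z₂ V₂ (fun y w => V₁ y w A) x u
          = fderiv ℝ (fun p : PQ n q => V₁ p.1 p.2 A) (x, u) (Wvf ρ Z₂ V₂ (x, u)) :=
            rhoP_eq (((hs₁.2 A).differentiable (by simp)) (x, u))
        _ = fderiv ℝ (fun y => (Wvf ρ Z₁ V₁ y).2 A) (x, u) (Wvf ρ Z₂ V₂ (x, u)) := rfl
        _ = _ := fderiv_comp_snd_apply hW₁ A _
    rw [e₁, e₂, VectorField.lieBracket]
    simp
end F2
section Misc
variable {ρ : (Fin n → ℝ) → Fin m → Fin n → ℝ}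
    {C : (Fin n → ℝ) → Fin m → Fin m → Fin m → ℝ}

/-- Antisymmetric double contraction with `C`. -/
lemma hpair {x : Fin n → ℝ} (hCanti : ∀ x γ α β, C x γ α β = - C x γ β α)
    (γ : Fin m) (f g : Fin m → ℝ) :
    ∑ α, ∑ β, C x γ α β * f α * g β = - ∑ α, ∑ β, C x γ α β * g α * f β := by
  rw [Finset.sum_comm, ← Finset.sum_neg_distrib]
  refine Finset.sum_congr rfl fun a _ => ?_
  rw [← Finset.sum_neg_distrib]
  refine Finset.sum_congr rfl fun b _ => ?_
  rw [hCanti x γ b a]; ring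

/-- Scaling a section scales `rhoP` (purely algebraic). -/
lemma rhoP_scale {Z : (Fin n → ℝ) → (Fin q → ℝ) → Fin m → ℝ}
    {V : (Fin n → ℝ) → (Fin q → ℝ) → Fin q → ℝ}
    (f g : (Fin n → ℝ) → (Fin q → ℝ) → ℝ) (x : Fin n → ℝ) (u : Fin q → ℝ) :
    rhoP ρ (fun y w γ => f y w * Z y w γ) (fun y w A => f y w * V y w A) g x u
      = f x u * rhoP ρ Z V g x u := by
  rw [rhoP, rhoP, mul_add, Finset.mul_sum, Finset.mul_sum]
  refine congrArg₂ (· + ·) (Finset.sum_congr rfl fun i _ => ?_)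
    (Finset.sum_congr rfl fun A _ => by ring)
  have h : (∑ α, ρ x α i * (f x u * Z x u α)) = f x u * ∑ α, ρ x α i * Z x u α := by
    rw [Finset.mul_sum]; exact Finset.sum_congr rfl fun α _ => by ring
  rw [h]; ring
end Misc
lemma s4_rot {a b c d : ℕ} (f : Fin a → Fin b → Fin c → Fin d → ℝ) :
    ∑ x, ∑ y, ∑ z, ∑ w, f x y z w = ∑ y, ∑ z, ∑ w, ∑ x, f x y z w := by
  rw [Finset.sum_comm]
  exact Finset.sum_congr rfl fun y _ => s_rot (fun x z w => f x y z w)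

lemma s4_swap34 {a b c d : ℕ} (f : Fin a → Fin b → Fin c → Fin d → ℝ) :
    ∑ x, ∑ y, ∑ z, ∑ w, f x y z w = ∑ x, ∑ y, ∑ w, ∑ z, f x y z w :=
  Finset.sum_congr rfl fun _ _ => Finset.sum_congr rfl fun _ _ => Finset.sum_comm

lemma swap2 {n m : ℕ} (r : Fin m → Fin n → ℝ) (za : Fin m → ℝ) (c : Fin n → ℝ) :
    ∑ i, (∑ μ, r μ i * za μ) * c i = ∑ μ, za μ * ∑ i, r μ i * c i := by
  simp only [Finset.sum_mul, Finset.mul_sum]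
  rw [Finset.sum_comm]
  exact Finset.sum_congr rfl fun μ _ => Finset.sum_congr rfl fun i _ => by ring

section CTerm
variable {ρ : (Fin n → ℝ) → Fin m → Fin n → ℝ}
    {C : (Fin n → ℝ) → Fin m → Fin m → Fin m → ℝ}
    {Za Zb Zc : (Fin n → ℝ) → (Fin q → ℝ) → Fin m → ℝ}
    {Va Vb Vc : (Fin n → ℝ) → (Fin q → ℝ) → Fin q → ℝ}

lemma rhoP_cterm (hρ : ∀ α i, ContDiff ℝ (⊤ : ℕ∞) (fun x => ρ x α i))
    (hC : ∀ γ α β, ContDiff ℝ (⊤ : ℕ∞) (fun x => C x γ α β))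
    (hsa : SmoothSec Za Va) (hsb : SmoothSec Zb Vb) (hsc : SmoothSec Zc Vc)
    (γ : Fin m) (x : Fin n → ℝ) (u : Fin q → ℝ) :
    rhoP ρ Za Va (fun y w => ∑ α, ∑ β, C y γ α β * Zb y w α * Zc y w β) x u
      = ∑ α, ∑ β,
        ((∑ μ, Za x u μ * (∑ i, ρ x μ i * pd (fun y => C y γ α β) x i))
            * Zb x u α * Zc x u β
          + C x γ α β * rhoP ρ Za Va (fun y w => Zb y w α) x u * Zc x u β
          + C x γ α β * Zb x u α * rhoP ρ Za Va (fun y w => Zc y w β) x u) := by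
  have hCb : ∀ α β : Fin m, ContDiff ℝ (⊤ : ℕ∞)
      (fun p : PQ n q => C p.1 γ α β * Zb p.1 p.2 α) := fun α β =>
    ((hC γ α β).comp contDiff_fst).mul (hsb.1 α)
  have hd : ∀ α β : Fin m, DifferentiableAt ℝ
      (fun p : PQ n q => C p.1 γ α β * Zb p.1 p.2 α * Zc p.1 p.2 β) (x, u) := fun α β =>
    (((hCb α β).mul (hsc.1 β)).differentiable (by simp)) (x, u)
  have hsum : ∀ α : Fin m, DifferentiableAt ℝ
      (fun p : PQ n q => ∑ β, C p.1 γ α β * Zb p.1 p.2 α * Zc p.1 p.2 β) (x, u) := fun α =>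
    DifferentiableAt.fun_sum fun β _ => hd α β
  rw [rhoP_sum hsum]
  refine Finset.sum_congr rfl fun α _ => ?_
  rw [rhoP_sum (fun β => hd α β)]
  refine Finset.sum_congr rfl fun β _ => ?_
  rw [rhoP_mul (((hCb α β).differentiable (by simp)) (x, u)) (((hsc.1 β).differentiable (by simp)) (x, u))]
  rw [rhoP_mul ((((hC γ α β).comp contDiff_fst).differentiable (by simp)) (x, u))
    (((hsb.1 α).differentiable (by simp)) (x, u))]
  rw [rhoP_xonly (fun y => C y γ α β) x u]
  rw [swap2 (fun μ i => ρ x μ i) (Za x u) (fun i => pd (fun y => C y γ α β) x i)]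
  ring
end CTerm
section AlgJ
variable {m : ℕ}

lemma alg_jacobi (γ : Fin m)
    (Cx : Fin m → Fin m → Fin m → ℝ) (Sf : Fin m → Fin m → Fin m → Fin m → ℝ)
    (z1 z2 z3 d12 d13 d21 d23 d31 d32 : Fin m → ℝ)
    (hC : ∀ ν α β, Cx ν α β = - Cx ν β α)
    (hT : ∀ ν α β δ, Sf ν α β δ + Sf ν β δ α + Sf ν δ α β
      + (∑ μ, Cx μ β δ * Cx ν α μ) + (∑ μ, Cx μ δ α * Cx ν β μ)
      + (∑ μ, Cx μ α β * Cx ν δ μ) = 0) :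
    (∑ α, ∑ β, ((∑ μ, z1 μ * Sf γ μ α β) * z2 α * z3 β + Cx γ α β * d12 α * z3 β
      + Cx γ α β * z2 α * d13 β
      + Cx γ α β * z1 α * (d23 β - d32 β + ∑ μ, ∑ ν, Cx β μ ν * z2 μ * z3 ν)))
    + (∑ α, ∑ β, ((∑ μ, z2 μ * Sf γ μ α β) * z3 α * z1 β + Cx γ α β * d23 α * z1 β
      + Cx γ α β * z3 α * d21 β
      + Cx γ α β * z2 α * (d31 β - d13 β + ∑ μ, ∑ ν, Cx β μ ν * z3 μ * z1 ν)))
    + (∑ α, ∑ β, ((∑ μ, z3 μ * Sf γ μ α β) * z1 α * z2 β + Cx γ α β * d31 α * z2 β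
      + Cx γ α β * z1 α * d32 β
      + Cx γ α β * z3 α * (d12 β - d21 β + ∑ μ, ∑ ν, Cx β μ ν * z1 μ * z2 ν)))
    = 0 := by
  -- the antisymmetric pairing
  have hp : ∀ f g : Fin m → ℝ,
      (∑ α, ∑ β, Cx γ α β * f α * g β) + (∑ α, ∑ β, Cx γ α β * g α * f β) = 0 := by
    intro f g
    have h1 : (∑ α, ∑ β, Cx γ α β * g α * f β)
        = - ∑ α, ∑ β, Cx γ α β * f α * g β := by
      rw [Finset.sum_comm, ← Finset.sum_neg_distrib]
      refine Finset.sum_congr rfl fun a _ => ?_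
      rw [← Finset.sum_neg_distrib]
      refine Finset.sum_congr rfl fun b _ => ?_
      rw [hC γ b a]; ring
    rw [h1]; ring
  -- split each cyclic element
  have split : ∀ (za zb zc dab dac dbc dcb : Fin m → ℝ),
      (∑ α, ∑ β, ((∑ μ, za μ * Sf γ μ α β) * zb α * zc β + Cx γ α β * dab α * zc β
        + Cx γ α β * zb α * dac β
        + Cx γ α β * za α * (dbc β - dcb β + ∑ μ, ∑ ν, Cx β μ ν * zb μ * zc ν)))
      = (∑ α, ∑ β, (∑ μ, za μ * Sf γ μ α β) * zb α * zc β)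
        + (∑ α, ∑ β, Cx γ α β * dab α * zc β)
        + (∑ α, ∑ β, Cx γ α β * zb α * dac β)
        + (∑ α, ∑ β, Cx γ α β * za α * dbc β)
        - (∑ α, ∑ β, Cx γ α β * za α * dcb β)
        + (∑ α, ∑ β, Cx γ α β * za α * (∑ μ, ∑ ν, Cx β μ ν * zb μ * zc ν)) := by
    intro za zb zc dab dac dbc dcb
    simp only [mul_add, mul_sub, Finset.sum_add_distrib, Finset.sum_sub_distrib]
    ring
  rw [split z1 z2 z3 d12 d13 d23 d32, split z2 z3 z1 d23 d21 d31 d13,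
    split z3 z1 z2 d31 d32 d12 d21]
  -- canonical forms of the T-terms
  have t1 : (∑ α, ∑ β, (∑ μ, z1 μ * Sf γ μ α β) * z2 α * z3 β)
      = ∑ u, ∑ v, ∑ w, z1 u * z2 v * z3 w * Sf γ u v w := by
    simp only [Finset.sum_mul]
    rw [s_rot2 (fun α β μ => z1 μ * Sf γ μ α β * z2 α * z3 β)]
    exact Finset.sum_congr rfl fun u _ => Finset.sum_congr rfl fun v _ =>
      Finset.sum_congr rfl fun w _ => by ring
  have t2 : (∑ α, ∑ β, (∑ μ, z2 μ * Sf γ μ α β) * z3 α * z1 β)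
      = ∑ u, ∑ v, ∑ w, z1 u * z2 v * z3 w * Sf γ v w u := by
    simp only [Finset.sum_mul]
    rw [s_rot (fun α β μ => z2 μ * Sf γ μ α β * z3 α * z1 β)]
    exact Finset.sum_congr rfl fun u _ => Finset.sum_congr rfl fun v _ =>
      Finset.sum_congr rfl fun w _ => by ring
  have t3 : (∑ α, ∑ β, (∑ μ, z3 μ * Sf γ μ α β) * z1 α * z2 β)
      = ∑ u, ∑ v, ∑ w, z1 u * z2 v * z3 w * Sf γ w u v := by
    simp only [Finset.sum_mul]
    exact Finset.sum_congr rfl fun u _ => Finset.sum_congr rfl fun v _ =>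
      Finset.sum_congr rfl fun w _ => by ring
  -- canonical forms of the quadratic terms
  have q1 : (∑ α, ∑ β, Cx γ α β * z1 α * (∑ μ, ∑ ν, Cx β μ ν * z2 μ * z3 ν))
      = ∑ u, ∑ v, ∑ w, z1 u * z2 v * z3 w * (∑ μ, Cx μ v w * Cx γ u μ) := by
    simp only [Finset.mul_sum]
    refine Finset.sum_congr rfl fun u _ => ?_
    rw [s_rot (fun β v w => Cx γ u β * z1 u * (Cx β v w * z2 v * z3 w))]
    exact Finset.sum_congr rfl fun v _ => Finset.sum_congr rfl fun w _ =>
      Finset.sum_congr rfl fun μ _ => by ring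
  have q2 : (∑ α, ∑ β, Cx γ α β * z2 α * (∑ μ, ∑ ν, Cx β μ ν * z3 μ * z1 ν))
      = ∑ u, ∑ v, ∑ w, z1 u * z2 v * z3 w * (∑ μ, Cx μ w u * Cx γ v μ) := by
    simp only [Finset.mul_sum]
    rw [s4_rot (fun α β μ ν => Cx γ α β * z2 α * (Cx β μ ν * z3 μ * z1 ν))]
    rw [s4_rot (fun β μ ν α => Cx γ α β * z2 α * (Cx β μ ν * z3 μ * z1 ν))]
    rw [s4_rot (fun μ ν α β => Cx γ α β * z2 α * (Cx β μ ν * z3 μ * z1 ν))]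
    rw [s4_swap34 (fun ν α β μ => Cx γ α β * z2 α * (Cx β μ ν * z3 μ * z1 ν))]
    exact Finset.sum_congr rfl fun u _ => Finset.sum_congr rfl fun v _ =>
      Finset.sum_congr rfl fun w _ => Finset.sum_congr rfl fun μ _ => by ring
  have q3 : (∑ α, ∑ β, Cx γ α β * z3 α * (∑ μ, ∑ ν, Cx β μ ν * z1 μ * z2 ν))
      = ∑ u, ∑ v, ∑ w, z1 u * z2 v * z3 w * (∑ μ, Cx μ u v * Cx γ w μ) := by
    simp only [Finset.mul_sum]
    rw [s4_rot (fun α β μ ν => Cx γ α β * z3 α * (Cx β μ ν * z1 μ * z2 ν))]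
    rw [s4_rot (fun β μ ν α => Cx γ α β * z3 α * (Cx β μ ν * z1 μ * z2 ν))]
    exact Finset.sum_congr rfl fun u _ => Finset.sum_congr rfl fun v _ =>
      Finset.sum_congr rfl fun w _ => Finset.sum_congr rfl fun μ _ => by ring
  have hTsum : (∑ u, ∑ v, ∑ w, z1 u * z2 v * z3 w * Sf γ u v w)
      + (∑ u, ∑ v, ∑ w, z1 u * z2 v * z3 w * Sf γ v w u)
      + (∑ u, ∑ v, ∑ w, z1 u * z2 v * z3 w * Sf γ w u v)
      + (∑ u, ∑ v, ∑ w, z1 u * z2 v * z3 w * (∑ μ, Cx μ v w * Cx γ u μ))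
      + (∑ u, ∑ v, ∑ w, z1 u * z2 v * z3 w * (∑ μ, Cx μ w u * Cx γ v μ))
      + (∑ u, ∑ v, ∑ w, z1 u * z2 v * z3 w * (∑ μ, Cx μ u v * Cx γ w μ)) = 0 := by
    simp only [← Finset.sum_add_distrib]
    refine Finset.sum_eq_zero fun u _ => Finset.sum_eq_zero fun v _ =>
      Finset.sum_eq_zero fun w _ => ?_
    linear_combination z1 u * z2 v * z3 w * hT γ u v w
  have hp1 := hp d12 z3
  have hp2 := hp z1 d23
  have hp3 := hp z2 d31
  linear_combination t1 + t2 + t3 + q1 + q2 + q3 + hTsum + hp1 + hp2 + hp3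

end AlgJ
section Jac2
variable {ρ : (Fin n → ℝ) → Fin m → Fin n → ℝ}
    {C : (Fin n → ℝ) → Fin m → Fin m → Fin m → ℝ}

lemma smoothSec_br (hρ : ∀ α i, ContDiff ℝ (⊤ : ℕ∞) (fun x => ρ x α i))
    (hC : ∀ γ α β, ContDiff ℝ (⊤ : ℕ∞) (fun x => C x γ α β))
    {Z₁ Z₂ : (Fin n → ℝ) → (Fin q → ℝ) → Fin m → ℝ}
    {V₁ V₂ : (Fin n → ℝ) → (Fin q → ℝ) → Fin q → ℝ}
    (hs₁ : SmoothSec Z₁ V₁) (hs₂ : SmoothSec Z₂ V₂) :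
    SmoothSec (brPZ ρ C Z₁ V₁ Z₂ V₂) (brPV ρ Z₁ V₁ Z₂ V₂) := by
  constructor
  · intro γ
    have h : (fun p : PQ n q => brPZ ρ C Z₁ V₁ Z₂ V₂ p.1 p.2 γ)
        = fun p : PQ n q => rhoP ρ Z₁ V₁ (fun y w => Z₂ y w γ) p.1 p.2
          - rhoP ρ Z₂ V₂ (fun y w => Z₁ y w γ) p.1 p.2
          + ∑ α, ∑ β, C p.1 γ α β * Z₁ p.1 p.2 α * Z₂ p.1 p.2 β := rfl
    rw [h]
    exact ((smooth_hat_rhoP hρ hs₁ (hs₂.1 γ)).sub (smooth_hat_rhoP hρ hs₂ (hs₁.1 γ))).add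
      (ContDiff.sum fun α _ => ContDiff.sum fun β _ =>
        ((((hC γ α β).comp contDiff_fst).mul (hs₁.1 α)).mul (hs₂.1 β)))
  · intro A
    have h : (fun p : PQ n q => brPV ρ Z₁ V₁ Z₂ V₂ p.1 p.2 A)
        = fun p : PQ n q => rhoP ρ Z₁ V₁ (fun y w => V₂ y w A) p.1 p.2
          - rhoP ρ Z₂ V₂ (fun y w => V₁ y w A) p.1 p.2 := rfl
    rw [h]
    exact (smooth_hat_rhoP hρ hs₁ (hs₂.2 A)).sub (smooth_hat_rhoP hρ hs₂ (hs₁.2 A))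

lemma fderiv_dir {G : PQ n q → ℝ} {W : PQ n q → PQ n q}
    (hG : ContDiff ℝ (⊤ : ℕ∞) G) (hW : ContDiff ℝ (⊤ : ℕ∞) W) (p v : PQ n q) :
    fderiv ℝ (fun y => fderiv ℝ G y (W y)) p v
      = fderiv ℝ (fderiv ℝ G) p v (W p) + fderiv ℝ G p (fderiv ℝ W p v) := by
  rw [fderiv_clm_apply (((hG.fderiv_right (m := 1) (WithTop.coe_le_coe.2 le_top)).differentiable one_ne_zero) p)
    ((hW.differentiable (by simp)) p)]
  simp only [ContinuousLinearMap.add_apply, ContinuousLinearMap.coe_comp', Function.comp_apply,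
    ContinuousLinearMap.flip_apply]
  ring

variable {Za Zb Zc : (Fin n → ℝ) → (Fin q → ℝ) → Fin m → ℝ}
    {Va Vb Vc : (Fin n → ℝ) → (Fin q → ℝ) → Fin q → ℝ}

lemma brPZ_nested_expand (hρ : ∀ α i, ContDiff ℝ (⊤ : ℕ∞) (fun x => ρ x α i))
    (hC : ∀ γ α β, ContDiff ℝ (⊤ : ℕ∞) (fun x => C x γ α β))
    (heq1 : ∀ (x : Fin n → ℝ) (i : Fin n) (α β : Fin m),
      (∑ j, ρ x α j * pd (fun y => ρ y β i) x j)
        - (∑ j, ρ x β j * pd (fun y => ρ y α i) x j)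
        = ∑ γ, ρ x γ i * C x γ α β)
    (hsa : SmoothSec Za Va) (hsb : SmoothSec Zb Vb) (hsc : SmoothSec Zc Vc)
    (x : Fin n → ℝ) (u : Fin q → ℝ) (γ : Fin m) :
    brPZ ρ C Za Va (brPZ ρ C Zb Vb Zc Vc) (brPV ρ Zb Vb Zc Vc) x u γ
      = (fderiv ℝ (fderiv ℝ (fun p : PQ n q => Zc p.1 p.2 γ)) (x, u)
            (Wvf ρ Za Va (x, u)) (Wvf ρ Zb Vb (x, u))
          - fderiv ℝ (fderiv ℝ (fun p : PQ n q => Zb p.1 p.2 γ)) (x, u)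
            (Wvf ρ Za Va (x, u)) (Wvf ρ Zc Vc (x, u)))
        + (fderiv ℝ (fun p : PQ n q => Zc p.1 p.2 γ) (x, u)
            (fderiv ℝ (Wvf ρ Zb Vb) (x, u) (Wvf ρ Za Va (x, u)))
          - fderiv ℝ (fun p : PQ n q => Zb p.1 p.2 γ) (x, u)
            (fderiv ℝ (Wvf ρ Zc Vc) (x, u) (Wvf ρ Za Va (x, u))))
        - (fderiv ℝ (fun p : PQ n q => Za p.1 p.2 γ) (x, u)
            (fderiv ℝ (Wvf ρ Zc Vc) (x, u) (Wvf ρ Zb Vb (x, u)))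
          - fderiv ℝ (fun p : PQ n q => Za p.1 p.2 γ) (x, u)
            (fderiv ℝ (Wvf ρ Zb Vb) (x, u) (Wvf ρ Zc Vc (x, u))))
        + (∑ α, ∑ β,
          ((∑ μ, Za x u μ * (∑ i, ρ x μ i * pd (fun y => C y γ α β) x i))
              * Zb x u α * Zc x u β
            + C x γ α β * rhoP ρ Za Va (fun y w => Zb y w α) x u * Zc x u β
            + C x γ α β * Zb x u α * rhoP ρ Za Va (fun y w => Zc y w β) x u
            + C x γ α β * Za x u α *
              (rhoP ρ Zb Vb (fun y w => Zc y w β) x u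
                - rhoP ρ Zc Vc (fun y w => Zb y w β) x u
                + ∑ μ, ∑ ν, C x β μ ν * Zb x u μ * Zc x u ν))) := by
  -- smoothness of the pieces
  have ht1 : ContDiff ℝ (⊤ : ℕ∞) (fun p : PQ n q =>
      fderiv ℝ (fun p : PQ n q => Zc p.1 p.2 γ) p (Wvf ρ Zb Vb p)) :=
    ((hsc.1 γ).fderiv_right (by simp)).clm_apply (smooth_Wvf hρ hsb)
  have ht2 : ContDiff ℝ (⊤ : ℕ∞) (fun p : PQ n q =>
      fderiv ℝ (fun p : PQ n q => Zb p.1 p.2 γ) p (Wvf ρ Zc Vc p)) :=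
    ((hsb.1 γ).fderiv_right (by simp)).clm_apply (smooth_Wvf hρ hsc)
  have ht3 : ContDiff ℝ (⊤ : ℕ∞) (fun p : PQ n q =>
      ∑ α, ∑ β, C p.1 γ α β * Zb p.1 p.2 α * Zc p.1 p.2 β) :=
    ContDiff.sum fun α _ => ContDiff.sum fun β _ =>
      ((((hC γ α β).comp contDiff_fst).mul (hsb.1 α)).mul (hsc.1 β))
  -- the hat of the inner bracket Z-component
  have hfn : (fun p : PQ n q => brPZ ρ C Zb Vb Zc Vc p.1 p.2 γ)
      = fun p : PQ n q =>
        (fderiv ℝ (fun p : PQ n q => Zc p.1 p.2 γ) p (Wvf ρ Zb Vb p)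
          - fderiv ℝ (fun p : PQ n q => Zb p.1 p.2 γ) p (Wvf ρ Zc Vc p))
        + ∑ α, ∑ β, C p.1 γ α β * Zb p.1 p.2 α * Zc p.1 p.2 β := by
    funext p
    show rhoP ρ Zb Vb (fun y w => Zc y w γ) p.1 p.2
        - rhoP ρ Zc Vc (fun y w => Zb y w γ) p.1 p.2
        + (∑ α, ∑ β, C p.1 γ α β * Zb p.1 p.2 α * Zc p.1 p.2 β) = _
    rw [rhoP_eq (((hsc.1 γ).differentiable (by simp)) (p.1, p.2)),
      rhoP_eq (((hsb.1 γ).differentiable (by simp)) (p.1, p.2))]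
  -- piece A
  have hA : rhoP ρ Za Va (fun y w => brPZ ρ C Zb Vb Zc Vc y w γ) x u
      = (fderiv ℝ (fderiv ℝ (fun p : PQ n q => Zc p.1 p.2 γ)) (x, u)
            (Wvf ρ Za Va (x, u)) (Wvf ρ Zb Vb (x, u))
          + fderiv ℝ (fun p : PQ n q => Zc p.1 p.2 γ) (x, u)
            (fderiv ℝ (Wvf ρ Zb Vb) (x, u) (Wvf ρ Za Va (x, u))))
        - (fderiv ℝ (fderiv ℝ (fun p : PQ n q => Zb p.1 p.2 γ)) (x, u)
            (Wvf ρ Za Va (x, u)) (Wvf ρ Zc Vc (x, u))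
          + fderiv ℝ (fun p : PQ n q => Zb p.1 p.2 γ) (x, u)
            (fderiv ℝ (Wvf ρ Zc Vc) (x, u) (Wvf ρ Za Va (x, u))))
        + ∑ α, ∑ β,
          ((∑ μ, Za x u μ * (∑ i, ρ x μ i * pd (fun y => C y γ α β) x i))
              * Zb x u α * Zc x u β
            + C x γ α β * rhoP ρ Za Va (fun y w => Zb y w α) x u * Zc x u β
            + C x γ α β * Zb x u α * rhoP ρ Za Va (fun y w => Zc y w β) x u) := by
    have hdiff : DifferentiableAt ℝ
        (fun p : PQ n q => brPZ ρ C Zb Vb Zc Vc p.1 p.2 γ) (x, u) :=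
      (((smoothSec_br hρ hC hsb hsc).1 γ).differentiable (by simp)) (x, u)
    rw [rhoP_eq hdiff, hfn]
    rw [fderiv_fun_add (by exact ((ht1.sub ht2).differentiable (by simp)) (x, u))
      (by exact (ht3.differentiable (by simp)) (x, u))]
    rw [fderiv_fun_sub (by exact (ht1.differentiable (by simp)) (x, u))
      (by exact (ht2.differentiable (by simp)) (x, u))]
    simp only [ContinuousLinearMap.add_apply, ContinuousLinearMap.sub_apply]
    rw [fderiv_dir (hsc.1 γ) (smooth_Wvf hρ hsb) (x, u) (Wvf ρ Za Va (x, u)),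
      fderiv_dir (hsb.1 γ) (smooth_Wvf hρ hsc) (x, u) (Wvf ρ Za Va (x, u))]
    have hc : fderiv ℝ (fun p : PQ n q =>
        ∑ α, ∑ β, C p.1 γ α β * Zb p.1 p.2 α * Zc p.1 p.2 β) (x, u) (Wvf ρ Za Va (x, u))
        = rhoP ρ Za Va (fun y w => ∑ α, ∑ β, C y γ α β * Zb y w α * Zc y w β) x u :=
      (rhoP_eq (ρ := ρ) (Z := Za) (V := Va)
        (g := fun y w => ∑ α, ∑ β, C y γ α β * Zb y w α * Zc y w β)
        ((ht3.differentiable (by simp)) (x, u))).symm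
    rw [hc, rhoP_cterm hρ hC hsa hsb hsc γ x u]
  -- piece B
  have hB : rhoP ρ (brPZ ρ C Zb Vb Zc Vc) (brPV ρ Zb Vb Zc Vc) (fun y w => Za y w γ) x u
      = fderiv ℝ (fun p : PQ n q => Za p.1 p.2 γ) (x, u)
          (fderiv ℝ (Wvf ρ Zc Vc) (x, u) (Wvf ρ Zb Vb (x, u)))
        - fderiv ℝ (fun p : PQ n q => Za p.1 p.2 γ) (x, u)
          (fderiv ℝ (Wvf ρ Zb Vb) (x, u) (Wvf ρ Zc Vc (x, u))) := by
    rw [rhoP_eq (((hsa.1 γ).differentiable (by simp)) (x, u))]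
    rw [F2 hρ hsb hsc heq1 (x, u)]
    rw [VectorField.lieBracket]
    rw [map_sub]
  -- the C-term
  have hCsum : (∑ α, ∑ β, C x γ α β * Za x u α * brPZ ρ C Zb Vb Zc Vc x u β)
      = ∑ α, ∑ β, C x γ α β * Za x u α *
          (rhoP ρ Zb Vb (fun y w => Zc y w β) x u
            - rhoP ρ Zc Vc (fun y w => Zb y w β) x u
            + ∑ μ, ∑ ν, C x β μ ν * Zb x u μ * Zc x u ν) :=
    Finset.sum_congr rfl fun α _ => Finset.sum_congr rfl fun β _ => by rw [brPZ]
  show rhoP ρ Za Va (fun y w => brPZ ρ C Zb Vb Zc Vc y w γ) x u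
      - rhoP ρ (brPZ ρ C Zb Vb Zc Vc) (brPV ρ Zb Vb Zc Vc) (fun y w => Za y w γ) x u
      + (∑ α, ∑ β, C x γ α β * Za x u α * brPZ ρ C Zb Vb Zc Vc x u β) = _
  rw [hA, hB, hCsum]
  simp only [Finset.sum_add_distrib]
  ring
end Jac2
section Jac3
variable {ρ : (Fin n → ℝ) → Fin m → Fin n → ℝ}
    {C : (Fin n → ℝ) → Fin m → Fin m → Fin m → ℝ}
    {Z₁ Z₂ Z₃ : (Fin n → ℝ) → (Fin q → ℝ) → Fin m → ℝ}
    {V₁ V₂ V₃ : (Fin n → ℝ) → (Fin q → ℝ) → Fin q → ℝ}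

lemma jacobiZ (hρ : ∀ α i, ContDiff ℝ (⊤ : ℕ∞) (fun x => ρ x α i))
    (hC : ∀ γ α β, ContDiff ℝ (⊤ : ℕ∞) (fun x => C x γ α β))
    (hCanti : ∀ x γ α β, C x γ α β = - C x γ β α)
    (heq1 : ∀ (x : Fin n → ℝ) (i : Fin n) (α β : Fin m),
      (∑ j, ρ x α j * pd (fun y => ρ y β i) x j)
        - (∑ j, ρ x β j * pd (fun y => ρ y α i) x j)
        = ∑ γ, ρ x γ i * C x γ α β)
    (heq2 : ∀ (x : Fin n → ℝ) (ν α β γ : Fin m),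
      (∑ i, ρ x α i * pd (fun y => C y ν β γ) x i)
        + (∑ i, ρ x β i * pd (fun y => C y ν γ α) x i)
        + (∑ i, ρ x γ i * pd (fun y => C y ν α β) x i)
        + (∑ μ, C x μ β γ * C x ν α μ)
        + (∑ μ, C x μ γ α * C x ν β μ)
        + (∑ μ, C x μ α β * C x ν γ μ) = 0)
    (hs₁ : SmoothSec Z₁ V₁) (hs₂ : SmoothSec Z₂ V₂) (hs₃ : SmoothSec Z₃ V₃)
    (x : Fin n → ℝ) (u : Fin q → ℝ) (γ : Fin m) :
    brPZ ρ C Z₁ V₁ (brPZ ρ C Z₂ V₂ Z₃ V₃) (brPV ρ Z₂ V₂ Z₃ V₃) x u γ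
      + brPZ ρ C Z₂ V₂ (brPZ ρ C Z₃ V₃ Z₁ V₁) (brPV ρ Z₃ V₃ Z₁ V₁) x u γ
      + brPZ ρ C Z₃ V₃ (brPZ ρ C Z₁ V₁ Z₂ V₂) (brPV ρ Z₁ V₁ Z₂ V₂) x u γ = 0 := by
  rw [brPZ_nested_expand hρ hC heq1 hs₁ hs₂ hs₃ x u γ,
    brPZ_nested_expand hρ hC heq1 hs₂ hs₃ hs₁ x u γ,
    brPZ_nested_expand hρ hC heq1 hs₃ hs₁ hs₂ x u γ]
  have s1 := (((hs₁.1 γ).contDiffAt (x := ((x, u) : PQ n q))).isSymmSndFDerivAt (by simp; exact WithTop.coe_le_coe.2 le_top)).eq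
    (Wvf ρ Z₂ V₂ (x, u)) (Wvf ρ Z₃ V₃ (x, u))
  have s2 := (((hs₂.1 γ).contDiffAt (x := ((x, u) : PQ n q))).isSymmSndFDerivAt (by simp; exact WithTop.coe_le_coe.2 le_top)).eq
    (Wvf ρ Z₃ V₃ (x, u)) (Wvf ρ Z₁ V₁ (x, u))
  have s3 := (((hs₃.1 γ).contDiffAt (x := ((x, u) : PQ n q))).isSymmSndFDerivAt (by simp; exact WithTop.coe_le_coe.2 le_top)).eq
    (Wvf ρ Z₁ V₁ (x, u)) (Wvf ρ Z₂ V₂ (x, u))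
  have halg := alg_jacobi γ (fun ν α β => C x ν α β)
    (fun ν μ α β => ∑ i, ρ x μ i * pd (fun y => C y ν α β) x i)
    (Z₁ x u) (Z₂ x u) (Z₃ x u)
    (fun α => rhoP ρ Z₁ V₁ (fun y w => Z₂ y w α) x u)
    (fun α => rhoP ρ Z₁ V₁ (fun y w => Z₃ y w α) x u)
    (fun α => rhoP ρ Z₂ V₂ (fun y w => Z₁ y w α) x u)
    (fun α => rhoP ρ Z₂ V₂ (fun y w => Z₃ y w α) x u)
    (fun α => rhoP ρ Z₃ V₃ (fun y w => Z₁ y w α) x u)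
    (fun α => rhoP ρ Z₃ V₃ (fun y w => Z₂ y w α) x u)
    (fun ν α β => hCanti x ν α β)
    (fun ν α β δ => heq2 x ν α β δ)
  linear_combination halg + s1 + s2 + s3

lemma jacobiV (hρ : ∀ α i, ContDiff ℝ (⊤ : ℕ∞) (fun x => ρ x α i))
    (hC : ∀ γ α β, ContDiff ℝ (⊤ : ℕ∞) (fun x => C x γ α β))
    (heq1 : ∀ (x : Fin n → ℝ) (i : Fin n) (α β : Fin m),
      (∑ j, ρ x α j * pd (fun y => ρ y β i) x j)
        - (∑ j, ρ x β j * pd (fun y => ρ y α i) x j)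
        = ∑ γ, ρ x γ i * C x γ α β)
    (hs₁ : SmoothSec Z₁ V₁) (hs₂ : SmoothSec Z₂ V₂) (hs₃ : SmoothSec Z₃ V₃)
    (x : Fin n → ℝ) (u : Fin q → ℝ) (A : Fin q) :
    brPV ρ Z₁ V₁ (brPZ ρ C Z₂ V₂ Z₃ V₃) (brPV ρ Z₂ V₂ Z₃ V₃) x u A
      + brPV ρ Z₂ V₂ (brPZ ρ C Z₃ V₃ Z₁ V₁) (brPV ρ Z₃ V₃ Z₁ V₁) x u A
      + brPV ρ Z₃ V₃ (brPZ ρ C Z₁ V₁ Z₂ V₂) (brPV ρ Z₁ V₁ Z₂ V₂) x u A = 0 := by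
  set W₁ := Wvf ρ Z₁ V₁ with hW₁
  set W₂ := Wvf ρ Z₂ V₂ with hW₂
  set W₃ := Wvf ρ Z₃ V₃ with hW₃
  have hw23 : Wvf ρ (brPZ ρ C Z₂ V₂ Z₃ V₃) (brPV ρ Z₂ V₂ Z₃ V₃)
      = VectorField.lieBracket ℝ W₂ W₃ := funext fun p => F2 hρ hs₂ hs₃ heq1 p
  have hw31 : Wvf ρ (brPZ ρ C Z₃ V₃ Z₁ V₁) (brPV ρ Z₃ V₃ Z₁ V₁)
      = VectorField.lieBracket ℝ W₃ W₁ := funext fun p => F2 hρ hs₃ hs₁ heq1 p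
  have hw12 : Wvf ρ (brPZ ρ C Z₁ V₁ Z₂ V₂) (brPV ρ Z₁ V₁ Z₂ V₂)
      = VectorField.lieBracket ℝ W₁ W₂ := funext fun p => F2 hρ hs₁ hs₂ heq1 p
  have t1 : brPV ρ Z₁ V₁ (brPZ ρ C Z₂ V₂ Z₃ V₃) (brPV ρ Z₂ V₂ Z₃ V₃) x u A
      = (VectorField.lieBracket ℝ W₁ (VectorField.lieBracket ℝ W₂ W₃) (x, u)).2 A := by
    have h := F2 hρ hs₁ (smoothSec_br hρ hC hs₂ hs₃) heq1 (x, u)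
    calc brPV ρ Z₁ V₁ (brPZ ρ C Z₂ V₂ Z₃ V₃) (brPV ρ Z₂ V₂ Z₃ V₃) x u A
        = (Wvf ρ (brPZ ρ C Z₁ V₁ (brPZ ρ C Z₂ V₂ Z₃ V₃) (brPV ρ Z₂ V₂ Z₃ V₃))
            (brPV ρ Z₁ V₁ (brPZ ρ C Z₂ V₂ Z₃ V₃) (brPV ρ Z₂ V₂ Z₃ V₃)) (x, u)).2 A := rfl
      _ = (VectorField.lieBracket ℝ W₁
            (Wvf ρ (brPZ ρ C Z₂ V₂ Z₃ V₃) (brPV ρ Z₂ V₂ Z₃ V₃)) (x, u)).2 A := by rw [h]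
      _ = _ := by rw [hw23]
  have t2 : brPV ρ Z₂ V₂ (brPZ ρ C Z₃ V₃ Z₁ V₁) (brPV ρ Z₃ V₃ Z₁ V₁) x u A
      = (VectorField.lieBracket ℝ W₂ (VectorField.lieBracket ℝ W₃ W₁) (x, u)).2 A := by
    have h := F2 hρ hs₂ (smoothSec_br hρ hC hs₃ hs₁) heq1 (x, u)
    calc brPV ρ Z₂ V₂ (brPZ ρ C Z₃ V₃ Z₁ V₁) (brPV ρ Z₃ V₃ Z₁ V₁) x u A
        = (Wvf ρ (brPZ ρ C Z₂ V₂ (brPZ ρ C Z₃ V₃ Z₁ V₁) (brPV ρ Z₃ V₃ Z₁ V₁))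
            (brPV ρ Z₂ V₂ (brPZ ρ C Z₃ V₃ Z₁ V₁) (brPV ρ Z₃ V₃ Z₁ V₁)) (x, u)).2 A := rfl
      _ = (VectorField.lieBracket ℝ W₂
            (Wvf ρ (brPZ ρ C Z₃ V₃ Z₁ V₁) (brPV ρ Z₃ V₃ Z₁ V₁)) (x, u)).2 A := by rw [h]
      _ = _ := by rw [hw31]
  have t3 : brPV ρ Z₃ V₃ (brPZ ρ C Z₁ V₁ Z₂ V₂) (brPV ρ Z₁ V₁ Z₂ V₂) x u A
      = (VectorField.lieBracket ℝ W₃ (VectorField.lieBracket ℝ W₁ W₂) (x, u)).2 A := by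
    have h := F2 hρ hs₃ (smoothSec_br hρ hC hs₁ hs₂) heq1 (x, u)
    calc brPV ρ Z₃ V₃ (brPZ ρ C Z₁ V₁ Z₂ V₂) (brPV ρ Z₁ V₁ Z₂ V₂) x u A
        = (Wvf ρ (brPZ ρ C Z₃ V₃ (brPZ ρ C Z₁ V₁ Z₂ V₂) (brPV ρ Z₁ V₁ Z₂ V₂))
            (brPV ρ Z₃ V₃ (brPZ ρ C Z₁ V₁ Z₂ V₂) (brPV ρ Z₁ V₁ Z₂ V₂)) (x, u)).2 A := rfl
      _ = (VectorField.lieBracket ℝ W₃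
            (Wvf ρ (brPZ ρ C Z₁ V₁ Z₂ V₂) (brPV ρ Z₁ V₁ Z₂ V₂)) (x, u)).2 A := by rw [h]
      _ = _ := by rw [hw12]
  rw [t1, t2, t3]
  have hc₁ : ContDiffAt ℝ 2 W₁ (x, u) := ((smooth_Wvf hρ hs₁).of_le (WithTop.coe_le_coe.2 le_top)).contDiffAt
  have hc₂ : ContDiffAt ℝ 2 W₂ (x, u) := ((smooth_Wvf hρ hs₂).of_le (WithTop.coe_le_coe.2 le_top)).contDiffAt
  have hc₃ : ContDiffAt ℝ 2 W₃ (x, u) := ((smooth_Wvf hρ hs₃).of_le (WithTop.coe_le_coe.2 le_top)).contDiffAt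
  have l := VectorField.leibniz_identity_lieBracket (𝕜 := ℝ) (by simp [minSmoothness_of_isRCLikeNormedField]) hc₁ hc₂ hc₃
  have sw : VectorField.lieBracket ℝ W₃ W₁ = (-1 : ℝ) • VectorField.lieBracket ℝ W₁ W₃ :=
    funext fun p => by rw [VectorField.lieBracket_swap]; simp
  have hd13 : DifferentiableAt ℝ (VectorField.lieBracket ℝ W₁ W₃) (x, u) := by
    have : ContDiff ℝ 1 (VectorField.lieBracket ℝ W₁ W₃) :=
      ContDiff.lieBracket_vectorField (smooth_Wvf hρ hs₁) (smooth_Wvf hρ hs₃) (WithTop.coe_le_coe.2 le_top)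
    exact (this.differentiable one_ne_zero) (x, u)
  have e2 : VectorField.lieBracket ℝ W₂ (VectorField.lieBracket ℝ W₃ W₁) (x, u)
      = - VectorField.lieBracket ℝ W₂ (VectorField.lieBracket ℝ W₁ W₃) (x, u) := by
    rw [sw, VectorField.lieBracket_const_smul_right hd13]
    simp
  have e3 : VectorField.lieBracket ℝ W₃ (VectorField.lieBracket ℝ W₁ W₂) (x, u)
      = - VectorField.lieBracket ℝ (VectorField.lieBracket ℝ W₁ W₂) W₃ (x, u) :=
    VectorField.lieBracket_swap
  have jac : VectorField.lieBracket ℝ W₁ (VectorField.lieBracket ℝ W₂ W₃) (x, u)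
      + VectorField.lieBracket ℝ W₂ (VectorField.lieBracket ℝ W₃ W₁) (x, u)
      + VectorField.lieBracket ℝ W₃ (VectorField.lieBracket ℝ W₁ W₂) (x, u) = 0 := by
    rw [l, e2, e3]; abel
  have := congrArg (fun t : PQ n q => t.2 A) jac
  simpa using this
end Jac3
theorem prolongation_is_lie_algebroid
    (ρ : (Fin n → ℝ) → Fin m → Fin n → ℝ)
    (C : (Fin n → ℝ) → Fin m → Fin m → Fin m → ℝ)
    (hρ : ∀ α i, ContDiff ℝ (⊤ : ℕ∞) (fun x => ρ x α i))
    (hC : ∀ γ α β, ContDiff ℝ (⊤ : ℕ∞) (fun x => C x γ α β))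
    (hCanti : ∀ x γ α β, C x γ α β = - C x γ β α)
    -- first structure equation of E
    (heq1 : ∀ (x : Fin n → ℝ) (i : Fin n) (α β : Fin m),
      (∑ j, ρ x α j * pd (fun y => ρ y β i) x j)
        - (∑ j, ρ x β j * pd (fun y => ρ y α i) x j)
        = ∑ γ, ρ x γ i * C x γ α β)
    -- second structure equation of E
    (heq2 : ∀ (x : Fin n → ℝ) (ν α β γ : Fin m),
      (∑ i, ρ x α i * pd (fun y => C y ν β γ) x i)
        + (∑ i, ρ x β i * pd (fun y => C y ν γ α) x i)
        + (∑ i, ρ x γ i * pd (fun y => C y ν α β) x i)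
        + (∑ μ, C x μ β γ * C x ν α μ)
        + (∑ μ, C x μ γ α * C x ν β μ)
        + (∑ μ, C x μ α β * C x ν γ μ) = 0) :
    -- antisymmetry of the prolongation bracket
    (∀ (Z₁ : (Fin n → ℝ) → (Fin q → ℝ) → Fin m → ℝ) (V₁ : (Fin n → ℝ) → (Fin q → ℝ) → Fin q → ℝ) (Z₂ : (Fin n → ℝ) → (Fin q → ℝ) → Fin m → ℝ) (V₂ : (Fin n → ℝ) → (Fin q → ℝ) → Fin q → ℝ), SmoothSec Z₁ V₁ → SmoothSec Z₂ V₂ →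
      ∀ x u, (∀ γ, brPZ ρ C Z₁ V₁ Z₂ V₂ x u γ = - brPZ ρ C Z₂ V₂ Z₁ V₁ x u γ) ∧
             (∀ A, brPV ρ Z₁ V₁ Z₂ V₂ x u A = - brPV ρ Z₂ V₂ Z₁ V₁ x u A)) ∧
    -- Leibniz rule with respect to the anchor
    (∀ (Z₁ : (Fin n → ℝ) → (Fin q → ℝ) → Fin m → ℝ) (V₁ : (Fin n → ℝ) → (Fin q → ℝ) → Fin q → ℝ) (Z₂ : (Fin n → ℝ) → (Fin q → ℝ) → Fin m → ℝ) (V₂ : (Fin n → ℝ) → (Fin q → ℝ) → Fin q → ℝ) (f : (Fin n → ℝ) → (Fin q → ℝ) → ℝ),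
      SmoothSec Z₁ V₁ → SmoothSec Z₂ V₂ →
      ContDiff ℝ (⊤ : ℕ∞) (fun p : (Fin n → ℝ) × (Fin q → ℝ) => f p.1 p.2) →
      ∀ x u,
        (∀ γ, brPZ ρ C Z₁ V₁ (fun y w γ' => f y w * Z₂ y w γ')
                (fun y w A => f y w * V₂ y w A) x u γ
          = rhoP ρ Z₁ V₁ f x u * Z₂ x u γ + f x u * brPZ ρ C Z₁ V₁ Z₂ V₂ x u γ) ∧
        (∀ A, brPV ρ Z₁ V₁ (fun y w γ' => f y w * Z₂ y w γ')
                (fun y w A' => f y w * V₂ y w A') x u A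
          = rhoP ρ Z₁ V₁ f x u * V₂ x u A + f x u * brPV ρ Z₁ V₁ Z₂ V₂ x u A)) ∧
    -- Jacobi identity
    (∀ (Z₁ : (Fin n → ℝ) → (Fin q → ℝ) → Fin m → ℝ) (V₁ : (Fin n → ℝ) → (Fin q → ℝ) → Fin q → ℝ) (Z₂ : (Fin n → ℝ) → (Fin q → ℝ) → Fin m → ℝ) (V₂ : (Fin n → ℝ) → (Fin q → ℝ) → Fin q → ℝ) (Z₃ : (Fin n → ℝ) → (Fin q → ℝ) → Fin m → ℝ) (V₃ : (Fin n → ℝ) → (Fin q → ℝ) → Fin q → ℝ), SmoothSec Z₁ V₁ → SmoothSec Z₂ V₂ → SmoothSec Z₃ V₃ →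
      ∀ x u,
        (∀ γ,
          brPZ ρ C Z₁ V₁ (brPZ ρ C Z₂ V₂ Z₃ V₃) (brPV ρ Z₂ V₂ Z₃ V₃) x u γ
            + brPZ ρ C Z₂ V₂ (brPZ ρ C Z₃ V₃ Z₁ V₁) (brPV ρ Z₃ V₃ Z₁ V₁) x u γ
            + brPZ ρ C Z₃ V₃ (brPZ ρ C Z₁ V₁ Z₂ V₂) (brPV ρ Z₁ V₁ Z₂ V₂) x u γ = 0) ∧
        (∀ A,
          brPV ρ Z₁ V₁ (brPZ ρ C Z₂ V₂ Z₃ V₃) (brPV ρ Z₂ V₂ Z₃ V₃) x u A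
            + brPV ρ Z₂ V₂ (brPZ ρ C Z₃ V₃ Z₁ V₁) (brPV ρ Z₃ V₃ Z₁ V₁) x u A
            + brPV ρ Z₃ V₃ (brPZ ρ C Z₁ V₁ Z₂ V₂) (brPV ρ Z₁ V₁ Z₂ V₂) x u A = 0)) ∧
    -- the anchor maps brackets to commutators of vector fields on P
    (∀ (Z₁ : (Fin n → ℝ) → (Fin q → ℝ) → Fin m → ℝ) (V₁ : (Fin n → ℝ) → (Fin q → ℝ) → Fin q → ℝ) (Z₂ : (Fin n → ℝ) → (Fin q → ℝ) → Fin m → ℝ) (V₂ : (Fin n → ℝ) → (Fin q → ℝ) → Fin q → ℝ) (g : (Fin n → ℝ) → (Fin q → ℝ) → ℝ),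
      SmoothSec Z₁ V₁ → SmoothSec Z₂ V₂ →
      ContDiff ℝ (⊤ : ℕ∞) (fun p : (Fin n → ℝ) × (Fin q → ℝ) => g p.1 p.2) →
      ∀ x u,
        rhoP ρ (brPZ ρ C Z₁ V₁ Z₂ V₂) (brPV ρ Z₁ V₁ Z₂ V₂) g x u
          = rhoP ρ Z₁ V₁ (rhoP ρ Z₂ V₂ g) x u - rhoP ρ Z₂ V₂ (rhoP ρ Z₁ V₁ g) x u) := by

  refine ⟨?_, ?_, ?_, ?_⟩
  -- antisymmetry
  · intro Z₁ V₁ Z₂ V₂ hs₁ hs₂ x u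
    refine ⟨fun γ => ?_, fun A => ?_⟩
    · simp only [brPZ]
      linear_combination hpair hCanti γ (Z₁ x u) (Z₂ x u)
    · simp only [brPV]; ring
  -- Leibniz rule
  · intro Z₁ V₁ Z₂ V₂ f hs₁ hs₂ hf x u
    have hfd := hf.differentiable (by simp)
    refine ⟨fun γ => ?_, fun A => ?_⟩
    · simp only [brPZ]
      have h1 := rhoP_mul (ρ := ρ) (Z := Z₁) (V := V₁) (f := f)
        (g := fun y w => Z₂ y w γ) (hfd (x, u)) (((hs₂.1 γ).differentiable (by simp)) (x, u))
      have h2 := rhoP_scale (ρ := ρ) (Z := Z₂) (V := V₂) f (fun y w => Z₁ y w γ) x u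
      have hS : (∑ α, ∑ β, C x γ α β * Z₁ x u α * (f x u * Z₂ x u β))
          = f x u * ∑ α, ∑ β, C x γ α β * Z₁ x u α * Z₂ x u β := by
        rw [Finset.mul_sum]
        refine Finset.sum_congr rfl fun α _ => ?_
        rw [Finset.mul_sum]
        exact Finset.sum_congr rfl fun β _ => by ring
      linear_combination h1 - h2 + hS
    · simp only [brPV]
      have h1 := rhoP_mul (ρ := ρ) (Z := Z₁) (V := V₁) (f := f)
        (g := fun y w => V₂ y w A) (hfd (x, u)) (((hs₂.2 A).differentiable (by simp)) (x, u))
      have h2 := rhoP_scale (ρ := ρ) (Z := Z₂) (V := V₂) f (fun y w => V₁ y w A) x u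
      linear_combination h1 - h2
  -- Jacobi identity
  · intro Z₁ V₁ Z₂ V₂ Z₃ V₃ hs₁ hs₂ hs₃ x u
    exact ⟨fun γ => jacobiZ hρ hC hCanti heq1 heq2 hs₁ hs₂ hs₃ x u γ,
      fun A => jacobiV hρ hC heq1 hs₁ hs₂ hs₃ x u A⟩
  -- anchor condition
  · intro Z₁ V₁ Z₂ V₂ g hs₁ hs₂ hg x u
    have hgd := hg.differentiable (by simp)
    have h1 : rhoP ρ (brPZ ρ C Z₁ V₁ Z₂ V₂) (brPV ρ Z₁ V₁ Z₂ V₂) g x u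
        = fderiv ℝ (fun p : PQ n q => g p.1 p.2) (x, u)
            (Wvf ρ (brPZ ρ C Z₁ V₁ Z₂ V₂) (brPV ρ Z₁ V₁ Z₂ V₂) (x, u)) :=
      rhoP_eq (hgd (x, u))
    rw [h1, F2 hρ hs₁ hs₂ heq1 (x, u),
      ← comm_fderiv hg (smooth_Wvf hρ hs₁) (smooth_Wvf hρ hs₂) (x, u)]
    have e12 : rhoP ρ Z₁ V₁ (rhoP ρ Z₂ V₂ g) x u
        = fderiv ℝ (fun y : PQ n q =>
            fderiv ℝ (fun p : PQ n q => g p.1 p.2) y (Wvf ρ Z₂ V₂ y)) (x, u)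
            (Wvf ρ Z₁ V₁ (x, u)) := by
      rw [rhoP_eq (g := rhoP ρ Z₂ V₂ g)
        (((smooth_hat_rhoP hρ hs₂ hg).differentiable (by simp)) (x, u)),
        hat_rhoP (ρ := ρ) (Z := Z₂) (V := V₂) hgd]
    have e21 : rhoP ρ Z₂ V₂ (rhoP ρ Z₁ V₁ g) x u
        = fderiv ℝ (fun y : PQ n q =>
            fderiv ℝ (fun p : PQ n q => g p.1 p.2) y (Wvf ρ Z₁ V₁ y)) (x, u)
            (Wvf ρ Z₂ V₂ (x, u)) := by
      rw [rhoP_eq (g := rhoP ρ Z₁ V₁ g)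
        (((smooth_hat_rhoP hρ hs₁ hg).differentiable (by simp)) (x, u)),
        hat_rhoP (ρ := ρ) (Z := Z₁) (V := V₁) hgd]
    rw [e12, e21]
end

section
/- On the prolongation T^E(E*) with canonical symplectic section Ω, the Hamiltonian section Γ_H defined by i_{Γ_H}Ω = dH for H ∈ C∞(E*) has local expression Γ_H = (∂H/∂μ_α) X_α − (ρ^i_α ∂H/∂x^i + μ_γ C^γ_{αβ} ∂H/∂μ_β) P^α; consequently its integral curves satisfy Hamilton's equations dx^i/dt = ρ^i_α ∂H/∂μ_α, dμ_α/dt = −ρ^i_α ∂H/∂x^i − μ_γ C^γ_{αβ} ∂H/∂μ_β. -/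
/-!
Hamiltonian sections on the prolongation `T^E(E*)`, in local coordinates.
Base `M = Fin n → ℝ`, frame index `Fin m`, structure functions `ρ x α i` and
`C x γ α β` (antisymmetric in the lower indices); `E*` has coordinates `(x, μ)`.
A fiber element of `T^E(E*)` is `z = (b, w)`, with anchor `(ρ(x)ᵀ b, w)`.  The
canonical symplectic section is
`Ω = 𝒳^α ∧ 𝒫_α + ½ μ_γ C^γ_{αβ} 𝒳^α ∧ 𝒳^β` (`canOmega`), and `dH(z)` is the
derivative of `H` along the anchor of `z` (`dirDer`).  Theorem: if a section
`Γ = (Γ.1, Γ.2)` of `T^E(E*)` satisfies `i_Γ Ω = dH` then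
`Γ = (∂H/∂μ_α) 𝒳_α − (ρ^i_α ∂H/∂x^i + μ_γ C^γ_{αβ} ∂H/∂μ_β) 𝒫^α`, and the
integral curves of `ρ(Γ)` satisfy Hamilton's equations.
-/

open scoped BigOperators

variable {n m : ℕ}

/-- Directional derivative of a function on `E*` along the anchor of the
prolongation fiber element `z = (b, w)`; for `g = H` this is `⟨dH, z⟩`. -/
noncomputable def dirDer (ρ : (Fin n → ℝ) → Fin m → Fin n → ℝ)
    (g : (Fin n → ℝ) → (Fin m → ℝ) → ℝ) (x : Fin n → ℝ) (μ : Fin m → ℝ)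
    (z : (Fin m → ℝ) × (Fin m → ℝ)) : ℝ :=
  (∑ i, (∑ α, ρ x α i * z.1 α) * pd (fun y => g y μ) x i)
    + ∑ α, z.2 α * pd (fun w => g x w) μ α

/-- The canonical symplectic section `Ω = 𝒳^α ∧ 𝒫_α + ½ μ_γ C^γ_{αβ} 𝒳^α ∧ 𝒳^β`. -/
noncomputable def canOmega (C : (Fin n → ℝ) → Fin m → Fin m → Fin m → ℝ)
    (x : Fin n → ℝ) (μ : Fin m → ℝ) (z₁ z₂ : (Fin m → ℝ) × (Fin m → ℝ)) : ℝ :=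
  (∑ α, (z₁.1 α * z₂.2 α - z₂.1 α * z₁.2 α))
    + (1 / 2 : ℝ) * ∑ α, ∑ β, (∑ γ, μ γ * C x γ α β) *
        (z₁.1 α * z₂.1 β - z₁.1 β * z₂.1 α)

theorem hamiltonian_section_and_equations
    (ρ : (Fin n → ℝ) → Fin m → Fin n → ℝ)
    (C : (Fin n → ℝ) → Fin m → Fin m → Fin m → ℝ)
    (hCanti : ∀ x γ α β, C x γ α β = - C x γ β α)
    (H : (Fin n → ℝ) → (Fin m → ℝ) → ℝ)
    (Γ : (Fin n → ℝ) → (Fin m → ℝ) → (Fin m → ℝ) × (Fin m → ℝ))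
    -- the symplectic equation i_Γ Ω = dH
    (hΓ : ∀ (x : Fin n → ℝ) (μ : Fin m → ℝ) (z : (Fin m → ℝ) × (Fin m → ℝ)),
      canOmega C x μ (Γ x μ) z = dirDer ρ H x μ z) :
    -- local expression of the Hamiltonian section
    (∀ (x : Fin n → ℝ) (μ : Fin m → ℝ) (α : Fin m),
      (Γ x μ).1 α = pd (fun w => H x w) μ α ∧
      (Γ x μ).2 α
        = - (∑ i, ρ x α i * pd (fun y => H y μ) x i)
          - ∑ β, (∑ γ, μ γ * C x γ α β) * pd (fun w => H x w) μ β) ∧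
    -- integral curves of ρ(Γ) satisfy Hamilton's equations
    (∀ (xc : ℝ → Fin n → ℝ) (mc : ℝ → Fin m → ℝ),
      (∀ (t : ℝ) (i : Fin n),
        HasDerivAt (fun s => xc s i)
          (∑ α, ρ (xc t) α i * (Γ (xc t) (mc t)).1 α) t) →
      (∀ (t : ℝ) (α : Fin m),
        HasDerivAt (fun s => mc s α) ((Γ (xc t) (mc t)).2 α) t) →
      (∀ (t : ℝ) (i : Fin n),
        HasDerivAt (fun s => xc s i)
          (∑ α, ρ (xc t) α i * pd (fun w => H (xc t) w) (mc t) α) t) ∧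
      (∀ (t : ℝ) (α : Fin m),
        HasDerivAt (fun s => mc s α)
          (- (∑ i, ρ (xc t) α i * pd (fun y => H y (mc t)) (xc t) i)
            - ∑ β, (∑ γ, mc t γ * C (xc t) γ α β) *
                pd (fun w => H (xc t) w) (mc t) β) t)) := by

  have key1 : ∀ (x : Fin n → ℝ) (μ : Fin m → ℝ) (α : Fin m),
      (Γ x μ).1 α = pd (fun w => H x w) μ α := by
    intro x μ α
    have h1 := hΓ x μ ((0 : Fin m → ℝ), Pi.single α 1)
    simp [canOmega, dirDer, Pi.single_apply, mul_ite, ite_mul,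
      Finset.sum_ite_eq'] at h1
    linarith [h1]
  have key2 : ∀ (x : Fin n → ℝ) (μ : Fin m → ℝ) (α : Fin m),
      (Γ x μ).2 α
        = - (∑ i, ρ x α i * pd (fun y => H y μ) x i)
          - ∑ β, (∑ γ, μ γ * C x γ α β) * pd (fun w => H x w) μ β := by
    intro x μ α
    have h2 := hΓ x μ (Pi.single α 1, (0 : Fin m → ℝ))
    simp [canOmega, dirDer, Pi.single_apply, mul_ite, ite_mul,
      Finset.sum_ite_eq', Finset.sum_ite_eq, mul_sub, Finset.sum_sub_distrib] at h2
    -- h2 should give the relation; massage using antisymmetry and key1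
    have hs : ∀ β, ((Γ x μ).1 β) = pd (fun w => H x w) μ β := key1 x μ
    have hanti : (∑ β, (∑ γ, μ γ * C x γ β α) * (Γ x μ).1 β)
        = - ∑ β, (∑ γ, μ γ * C x γ α β) * (Γ x μ).1 β := by
      rw [← Finset.sum_neg_distrib]
      refine Finset.sum_congr rfl fun β _ => ?_
      rw [show (∑ γ, μ γ * C x γ β α) = - ∑ γ, μ γ * C x γ α β by
        rw [← Finset.sum_neg_distrib]
        exact Finset.sum_congr rfl fun γ _ => by rw [hCanti x γ β α]; ring]
      ring
    simp only [hs] at h2 hanti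
    linarith [h2, hanti]
  refine ⟨fun x μ α => ⟨key1 x μ α, key2 x μ α⟩, ?_⟩
  intro xc mc hx hm
  constructor
  · intro t i
    have := hx t i
    simpa [key1] using this
  · intro t α
    have := hm t α
    simpa [key2] using this
end
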